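/- For all integers n ≥ 2 and q ≥ 2, f(n,q) ≥ q^{2^{n−1}} · (e^{(n−1)/(q−1)} · q^{n+1})^{−1/2}. In particular, f(n,q) ≥ q^{2^{n−1}(1+o(1))} as n,q → ∞. -/

import Mathlib

/-- `W` is an instance of the pattern `V`: the image of `V` under a semigroup
homomorphism sending each letter to a nonempty word. -/
def IsInst {α β : Type} (V : List α) (W : List β) : Prop :=
  ∃ φ : α → List β, (∀ a ∈ V, φ a ≠ []) ∧ W = (V.map φ).flatten

/-- `U` encounters `V`: some contiguous subword (infix) of `U` is an instance of `V`. -/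
def Encounters {α β : Type} (U : List β) (V : List α) : Prop :=
  ∃ W : List β, W <:+: U ∧ IsInst V W

/-- `U` avoids `V`: `U` does not encounter `V`. -/
def Avoids {α β : Type} (U : List β) (V : List α) : Prop :=
  ¬ Encounters U V

/-- The Zimin words over the alphabet ℕ: `Z₀ = ε`, `Z_{n+1} = Zₙ · n · Zₙ`. -/
def Zimin : ℕ → List ℕ
  | 0 => []
  | n + 1 => Zimin n ++ n :: Zimin n

/-- `zimf n q` is the smallest `M` such that every `q`-ary word of length `M`
encounters the Zimin word `Zₙ`. -/
noncomputable def zimf (n q : ℕ) : ℕ :=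
  sInf {M : ℕ | ∀ W : List (Fin q), W.length = M → Encounters W (Zimin n)}

/-- `ZC n q M` is the set of `q`-ary words of length `M` that are instances of `Zₙ`. -/
def ZC (n q M : ℕ) : Set (List (Fin q)) :=
  {W | W.length = M ∧ IsInst (Zimin n) W}

/-!
Write `c_n(m)` for the number of `q`-ary instances of `Zₙ` of length `m`. An instance of `Zₙ₊₁`
is `A C A` with `A` an instance of `Zₙ`, hence `|A| ≥ 2ⁿ - 1`, and `C ≠ ε`; summing the resulting
geometric series in `q⁻¹` gives `c_n(m) ≤ qᵐ (q/(q-1))ⁿ⁻¹ qⁿ⁺¹ / q^(2ⁿ)`. If every word of length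
`M` encounters `Zₙ`, each of them is `P I Q` with `I` a nonempty instance, and there are at most
`M²` choices of `(|P|, |I|)`, so `q^M ≤ M² q^M (q/(q-1))ⁿ⁻¹ qⁿ⁺¹ / q^(2ⁿ)`; finally
`(q/(q-1))ⁿ⁻¹ ≤ e^((n-1)/(q-1))`.

That the infimum defining `f(n,q)` is attained is the unavoidability of Zimin words: cut a long
word into blocks of `L + 1` letters, where every word of length `L` encounters `Zₙ`; once there are
more blocks than words of length `≤ L`, two blocks share an instance `I` of `Zₙ`, and the last
letter of the first block keeps the two copies apart, giving an instance `I C I` of `Zₙ₊₁`.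
-/

section

variable {α β : Type}

theorem IsInst.length_le {V : List α} {W : List β} (h : IsInst V W) : V.length ≤ W.length := by
  obtain ⟨φ, hφ, rfl⟩ := h
  rw [List.length_flatten]
  refine (List.length_le_sum_of_one_le _ ?_).trans' (by simp)
  simpa [Nat.one_le_iff_ne_zero] using hφ

theorem Encounters.mono {U U' : List β} {V : List α} (h : Encounters U V) (hU : U <:+: U') :
    Encounters U' V :=
  let ⟨W, hW, hinst⟩ := h
  ⟨W, hW.trans hU, hinst⟩

theorem lt_of_mem_zimin {n a : ℕ} (ha : a ∈ Zimin n) : a < n := by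
  induction n with
  | zero => simp [Zimin] at ha
  | succ n ih =>
    simp only [Zimin, List.mem_append, List.mem_cons] at ha
    rcases ha with h | rfl | h <;> grind

theorem length_zimin (n : ℕ) : (Zimin n).length = 2 ^ n - 1 := by
  induction n with
  | zero => rfl
  | succ n ih =>
    have := Nat.one_le_two_pow (n := n)
    simp only [Zimin, List.length_append, List.length_cons, ih, pow_succ]
    omega

theorem isInst_zimin_succ_iff {n : ℕ} {W : List β} :
    IsInst (Zimin (n + 1)) W ↔ ∃ A C, IsInst (Zimin n) A ∧ C ≠ [] ∧ W = A ++ C ++ A := by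
  constructor
  · rintro ⟨φ, hφ, rfl⟩
    refine ⟨((Zimin n).map φ).flatten, φ n, ⟨φ, fun a ha => hφ a (by simp [Zimin, ha]), rfl⟩,
      hφ n (by simp [Zimin]), by simp [Zimin]⟩
  · rintro ⟨A, C, ⟨ψ, hψ, rfl⟩, hC, rfl⟩
    -- `n` does not occur in `Zimin n`, so it can be sent to `C` without disturbing `ψ`.
    have hψ' : ∀ a ∈ Zimin n, (if a = n then C else ψ a) = ψ a := fun a ha =>
      if_neg (lt_of_mem_zimin ha).ne
    refine ⟨fun a => if a = n then C else ψ a, fun a ha => ?_, ?_⟩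
    · simp only [Zimin, List.mem_append, List.mem_cons] at ha
      rcases ha with ha | rfl | ha
      · simpa only [hψ' a ha] using hψ a ha
      · simpa using hC
      · simpa only [hψ' a ha] using hψ a ha
    · simp [Zimin, List.map_congr_left hψ']

theorem exists_infixes_or_encounters_zimin_succ {n L : ℕ}
    (hL : ∀ W : List β, W.length = L → Encounters W (Zimin n)) (k : ℕ) (W : List β)
    (hW : (L + 1) * k ≤ W.length) :
    Encounters W (Zimin (n + 1)) ∨
      ∃ S : Finset (List β), S.card = k ∧ ∀ I ∈ S, I.length ≤ L ∧ I <:+: W := by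
  classical
  induction k generalizing W with
  | zero => exact .inr ⟨∅, rfl, by simp⟩
  | succ k ih =>
    rw [Nat.mul_succ] at hW
    obtain ⟨y, W', hyW'⟩ : ∃ y W', W.drop L = y :: W' := by
      cases h : W.drop L with
      | nil => rw [List.drop_eq_nil_iff] at h; omega
      | cons y W' => exact ⟨y, W', rfl⟩
    have hW' : W' <:+: W :=
      (List.suffix_cons y W').isInfix.trans (hyW' ▸ (W.drop_suffix L).isInfix)
    have hlenW' : W.length = L + 1 + W'.length := by
      have := congrArg List.length hyW'
      rw [List.length_drop, List.length_cons] at this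
      omega
    obtain ⟨I, ⟨P, Q, hPQ⟩, hI⟩ := hL (W.take L) (by rw [List.length_take]; omega)
    have hsplit : W = P ++ I ++ (Q ++ [y]) ++ W' := by
      rw [← W.take_append_drop L, hyW', ← hPQ]; simp
    have hIW : I <:+: W := ⟨P, Q ++ [y] ++ W', by rw [hsplit]; simp⟩
    have hIL : I.length ≤ L := by
      have := congrArg List.length hPQ
      rw [List.length_append, List.length_append, List.length_take] at this
      omega
    rcases ih W' (by omega) with henc | ⟨S, hS, hSW'⟩
    · exact .inl (henc.mono hW')
    · by_cases hIS : I ∈ S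
      · obtain ⟨P', Q', rfl⟩ := (hSW' I hIS).2
        refine .inl ⟨I ++ (Q ++ [y] ++ P') ++ I, ⟨P, Q', by rw [hsplit]; simp⟩,
          isInst_zimin_succ_iff.2 ⟨I, _, hI, by simp, rfl⟩⟩
      · refine .inr ⟨insert I S, by rw [Finset.card_insert_of_notMem hIS, hS], ?_⟩
        simp only [Finset.mem_insert, forall_eq_or_imp]
        exact ⟨⟨hIL, hIW⟩, fun J hJ => ⟨(hSW' J hJ).1, (hSW' J hJ).2.trans hW'⟩⟩

end

theorem zimin_unavoidable (β : Type) [Finite β] (n : ℕ) :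
    ∃ M, ∀ W : List β, W.length = M → Encounters W (Zimin n) := by
  induction n with
  | zero => exact ⟨0, fun W _ => ⟨[], List.nil_infix, fun _ => [], by simp [Zimin], rfl⟩⟩
  | succ n ih =>
    obtain ⟨L, hL⟩ := ih
    set T := (List.finite_length_le β L).toFinset
    refine ⟨(L + 1) * (T.card + 1), fun W hW => ?_⟩
    refine (exists_infixes_or_encounters_zimin_succ hL _ W hW.ge).resolve_right ?_
    rintro ⟨S, hS, hSW⟩
    have : S ⊆ T := fun I hI => by simpa [T] using (hSW I hI).1
    have := Finset.card_le_card this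
    omega

noncomputable def words (q m : ℕ) : Finset (List (Fin q)) :=
  (List.finite_length_eq (Fin q) m).toFinset

theorem mem_words {q m : ℕ} {W : List (Fin q)} : W ∈ words q m ↔ W.length = m :=
  Set.Finite.mem_toFinset _

theorem card_words (q m : ℕ) : (words q m).card = q ^ m := by
  rw [words, ← Set.ncard_eq_toFinset_card _ (List.finite_length_eq (Fin q) m),
    ← Nat.card_coe_set_eq]
  change Nat.card (List.Vector (Fin q) m) = q ^ m
  rw [Nat.card_eq_fintype_card, card_vector, Fintype.card_fin]

noncomputable def ziminInstances (n q m : ℕ) : Finset (List (Fin q)) :=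
  ((List.finite_length_eq (Fin q) m).subset fun _ hW => hW.1 : (ZC n q m).Finite).toFinset

theorem mem_ziminInstances {n q m : ℕ} {W : List (Fin q)} :
    W ∈ ziminInstances n q m ↔ W.length = m ∧ IsInst (Zimin n) W :=
  Set.Finite.mem_toFinset _

theorem ziminInstances_subset_words (n q m : ℕ) : ziminInstances n q m ⊆ words q m :=
  fun _ hW => mem_words.2 (mem_ziminInstances.1 hW).1

theorem card_ziminInstances_succ_le (n q m : ℕ) :
    (ziminInstances (n + 1) q m).card ≤
      ∑ a ∈ (Finset.Ico (2 ^ n - 1) m).filter (2 * · < m),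
        (ziminInstances n q a).card * q ^ (m - 2 * a) := by
  have hcover : ziminInstances (n + 1) q m ⊆
      ((Finset.Ico (2 ^ n - 1) m).filter (2 * · < m)).biUnion fun a =>
        (ziminInstances n q a ×ˢ words q (m - 2 * a)).image fun AC => AC.1 ++ AC.2 ++ AC.1 := by
    intro W hW
    obtain ⟨rfl, hinst⟩ := mem_ziminInstances.1 hW
    obtain ⟨A, C, hA, hC, rfl⟩ := isInst_zimin_succ_iff.1 hinst
    have hAlen : 2 ^ n - 1 ≤ A.length := length_zimin n ▸ hA.length_le
    have hClen : 0 < C.length := List.length_pos_iff.2 hC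
    simp only [Finset.mem_biUnion, Finset.mem_filter, Finset.mem_Ico, Finset.mem_image,
      Finset.mem_product, mem_ziminInstances, mem_words, List.length_append]
    exact ⟨A.length, ⟨⟨hAlen, by omega⟩, by omega⟩, (A, C),
      ⟨⟨rfl, hA⟩, show C.length = _ by omega⟩, rfl⟩
  refine (Finset.card_le_card hcover).trans (Finset.card_biUnion_le.trans
    (Finset.sum_le_sum fun a _ => ?_))
  grw [Finset.card_image_le, Finset.card_product, card_words]

noncomputable def ziminDensityBound (n : ℕ) (q : ℝ) : ℝ :=
  (q / (q - 1)) ^ (n - 1) * q ^ (n + 1) / q ^ 2 ^ n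

theorem ziminDensityBound_pos (n : ℕ) {q : ℝ} (hq : 1 < q) : 0 < ziminDensityBound n q := by
  have : 0 < q / (q - 1) := div_pos (by linarith) (by linarith)
  unfold ziminDensityBound
  positivity

theorem ziminDensityBound_one {q : ℝ} (hq : q ≠ 0) : ziminDensityBound 1 q = 1 := by
  norm_num [ziminDensityBound, hq]

theorem ziminDensityBound_succ {n : ℕ} (hn : 1 ≤ n) {q : ℝ} (hq : 1 < q) :
    ziminDensityBound (n + 1) q = ziminDensityBound n q * (q⁻¹ ^ (2 ^ n - 1) / (1 - q⁻¹)) := by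
  obtain ⟨N, hN⟩ := Nat.exists_eq_add_of_le' (Nat.one_le_two_pow (n := n))
  obtain ⟨k, rfl⟩ := Nat.exists_eq_add_of_le' hn
  have : q - 1 ≠ 0 := by linarith
  have h1 : 1 - q⁻¹ = (q - 1) / q := by field_simp
  simp only [ziminDensityBound, pow_succ 2 (k + 1), hN, Nat.add_sub_cancel, h1, inv_pow, div_pow]
  field_simp
  ring

theorem card_ziminInstances_le {n q : ℕ} (hq : 2 ≤ q) (hn : 1 ≤ n) (m : ℕ) :
    ((ziminInstances n q m).card : ℝ) ≤ q ^ m * ziminDensityBound n q := by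
  have hq1 : (1 : ℝ) < q := by exact_mod_cast hq
  induction n, hn using Nat.le_induction generalizing m with
  | base =>
    have := Finset.card_le_card (ziminInstances_subset_words 1 q m)
    rw [card_words] at this
    rw [ziminDensityBound_one (by positivity), mul_one]
    exact_mod_cast this
  | succ n hn ih =>
    set γ := ziminDensityBound n q
    have hγ : 0 ≤ γ := (ziminDensityBound_pos n hq1).le
    have hterm : ∀ a ∈ (Finset.Ico (2 ^ n - 1) m).filter (2 * · < m),
        ((ziminInstances n q a).card : ℝ) * q ^ (m - 2 * a) ≤ q ^ m * γ * (q : ℝ)⁻¹ ^ a := by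
      intro a ha
      obtain ⟨k, rfl⟩ : ∃ k, m = 2 * a + k :=
        Nat.exists_eq_add_of_le (Finset.mem_filter.1 ha).2.le
      calc ((ziminInstances n q a).card : ℝ) * q ^ (2 * a + k - 2 * a)
          ≤ q ^ a * γ * q ^ k := by rw [Nat.add_sub_cancel_left]; gcongr; exact ih a
        _ = q ^ (2 * a + k) * γ * (q : ℝ)⁻¹ ^ a := by
          rw [pow_add, inv_pow]
          field_simp
          ring
    calc ((ziminInstances (n + 1) q m).card : ℝ)
        ≤ ∑ a ∈ (Finset.Ico (2 ^ n - 1) m).filter (2 * · < m),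
            ((ziminInstances n q a).card : ℝ) * q ^ (m - 2 * a) := by
          exact_mod_cast card_ziminInstances_succ_le n q m
      _ ≤ ∑ a ∈ Finset.Ico (2 ^ n - 1) m, q ^ m * γ * (q : ℝ)⁻¹ ^ a :=
          (Finset.sum_le_sum hterm).trans <| Finset.sum_le_sum_of_subset_of_nonneg
            (Finset.filter_subset _ _) (by intros; positivity)
      _ ≤ q ^ m * (γ * ((q : ℝ)⁻¹ ^ (2 ^ n - 1) / (1 - (q : ℝ)⁻¹))) := by
          rw [← Finset.mul_sum, mul_assoc]
          gcongr
          exact geom_sum_Ico_le_of_lt_one (by positivity) (inv_lt_one_of_one_lt₀ hq1)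
      _ = q ^ m * ziminDensityBound (n + 1) q := by rw [ziminDensityBound_succ hn hq1]

theorem words_subset_of_forall_encounters {n q M : ℕ} (hn : 1 ≤ n)
    (hM : ∀ W : List (Fin q), W.length = M → Encounters W (Zimin n)) :
    words q M ⊆ ((Finset.range M ×ˢ Finset.Icc 1 M).filter fun pm => pm.1 + pm.2 ≤ M).biUnion
      fun pm => (words q pm.1 ×ˢ ziminInstances n q pm.2 ×ˢ words q (M - pm.1 - pm.2)).image
        fun PIQ => PIQ.1 ++ PIQ.2.1 ++ PIQ.2.2 := by
  intro W hW
  have hlen := mem_words.1 hW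
  obtain ⟨I, ⟨P, Q, rfl⟩, hI⟩ := hM W hlen
  simp only [List.length_append] at hlen
  have hIlen : 1 ≤ I.length := by
    have := Nat.le_self_pow (n := n) (by omega) 2
    have := length_zimin n ▸ hI.length_le
    omega
  simp only [Finset.mem_biUnion, Finset.mem_filter, Finset.mem_product, Finset.mem_range,
    Finset.mem_Icc, Finset.mem_image, mem_ziminInstances, mem_words]
  exact ⟨(P.length, I.length), ⟨⟨by omega, hIlen, by omega⟩, by omega⟩, (P, I, Q),
    ⟨rfl, ⟨rfl, hI⟩, show Q.length = _ by omega⟩, rfl⟩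

theorem one_le_sq_mul_of_forall_encounters {n q M : ℕ} (hq : 2 ≤ q) (hn : 1 ≤ n)
    (hM : ∀ W : List (Fin q), W.length = M → Encounters W (Zimin n)) :
    1 ≤ (M : ℝ) ^ 2 * ziminDensityBound n q := by
  set γ := ziminDensityBound n q
  have hγ : 0 ≤ γ := (ziminDensityBound_pos n (by exact_mod_cast hq)).le
  set pairs := (Finset.range M ×ˢ Finset.Icc 1 M).filter fun pm => pm.1 + pm.2 ≤ M
  have hterm : ∀ pm ∈ pairs, (((words q pm.1 ×ˢ ziminInstances n q pm.2 ×ˢ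
      words q (M - pm.1 - pm.2)).image fun PIQ => PIQ.1 ++ PIQ.2.1 ++ PIQ.2.2).card : ℝ) ≤
        q ^ M * γ := by
    rintro ⟨p, m⟩ hpm
    have hpm : p + m ≤ M := (Finset.mem_filter.1 hpm).2
    calc _ ≤ ((words q p ×ˢ ziminInstances n q m ×ˢ words q (M - p - m)).card : ℝ) := by
          exact_mod_cast Finset.card_image_le
      _ = q ^ p * (ziminInstances n q m).card * q ^ (M - p - m) := by
          simp only [Finset.card_product, card_words]; push_cast; ring
      _ ≤ q ^ p * (q ^ m * γ) * q ^ (M - p - m) := by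
          gcongr; exact card_ziminInstances_le hq hn m
      _ = q ^ M * γ := by
          rw [← mul_rotate, ← mul_assoc, ← pow_add, ← pow_add, show M - p - m + p + m = M by omega]
  have hpairs : (pairs.card : ℝ) ≤ M ^ 2 := by
    have : pairs.card ≤ M ^ 2 := (Finset.card_filter_le _ _).trans (by simp [sq])
    exact_mod_cast this
  have : (q : ℝ) ^ M ≤ q ^ M * (M ^ 2 * γ) := by
    calc (q : ℝ) ^ M = (words q M).card := by rw [card_words]; push_cast; rfl
      _ ≤ ∑ pm ∈ pairs, (((words q pm.1 ×ˢ ziminInstances n q pm.2 ×ˢ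
            words q (M - pm.1 - pm.2)).image fun PIQ => PIQ.1 ++ PIQ.2.1 ++ PIQ.2.2).card : ℝ) := by
          exact_mod_cast (Finset.card_le_card (words_subset_of_forall_encounters hn hM)).trans
            Finset.card_biUnion_le
      _ ≤ pairs.card * (q ^ M * γ) := by simpa using Finset.sum_le_sum hterm
      _ ≤ M ^ 2 * (q ^ M * γ) := by gcongr
      _ = q ^ M * (M ^ 2 * γ) := mul_left_comm _ _ _
  exact (le_mul_iff_one_le_right (by positivity)).1 this

theorem one_add_pow_le_exp_mul {x : ℝ} (hx : -1 ≤ x) (k : ℕ) : (1 + x) ^ k ≤ Real.exp (k * x) := by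
  rw [Real.exp_nat_mul]
  exact pow_le_pow_left₀ (by linarith) (by linarith [Real.add_one_le_exp x]) k

theorem rpow_neg_half_sq {x : ℝ} (hx : 0 ≤ x) : (x ^ (-(1 : ℝ) / 2)) ^ 2 = x⁻¹ := by
  rw [← Real.rpow_natCast, ← Real.rpow_mul hx]
  norm_num [Real.rpow_neg_one]

/-- Lower bound: for all `n ≥ 2` and `q ≥ 2`,
`f(n,q) ≥ q^{2^{n−1}} · (e^{(n−1)/(q−1)} · q^{n+1})^{−1/2}`. -/
theorem zimf_lower_bound (n q : ℕ) (hn : 2 ≤ n) (hq : 2 ≤ q) :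
    (q : ℝ) ^ (2 ^ (n - 1)) *
        (Real.exp (((n : ℝ) - 1) / ((q : ℝ) - 1)) * (q : ℝ) ^ (n + 1)) ^ (-(1 : ℝ) / 2) ≤
      (zimf n q : ℝ) := by
  have hq1 : (0 : ℝ) < q - 1 := sub_pos.2 (by exact_mod_cast hq)
  set E := Real.exp (((n : ℝ) - 1) / ((q : ℝ) - 1)) * (q : ℝ) ^ (n + 1)
  have hcount := one_le_sq_mul_of_forall_encounters (M := zimf n q) hq (by omega)
    (Nat.sInf_mem (zimin_unavoidable (Fin q) n))
  rw [ziminDensityBound, mul_div_assoc', le_div_iff₀ (by positivity), one_mul] at hcount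
  have hexp : ((q : ℝ) / (q - 1)) ^ (n - 1) ≤ Real.exp (((n : ℝ) - 1) / ((q : ℝ) - 1)) := by
    have h := one_add_pow_le_exp_mul (x := 1 / ((q : ℝ) - 1))
      (by linarith [one_div_pos.2 hq1]) (n - 1)
    rwa [Nat.cast_sub (by omega), Nat.cast_one, one_add_div hq1.ne', sub_add_cancel,
      mul_one_div] at h
  have hsq : ((q : ℝ) ^ (2 ^ (n - 1)) * E ^ (-(1 : ℝ) / 2)) ^ 2 = q ^ 2 ^ n / E := by
    rw [mul_pow, rpow_neg_half_sq (by positivity), ← pow_mul, ← pow_succ,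
      Nat.sub_add_cancel (by omega), div_eq_mul_inv]
  refine le_of_pow_le_pow_left₀ two_ne_zero (Nat.cast_nonneg _) ?_
  rw [hsq, div_le_iff₀ (by positivity)]
  calc (q : ℝ) ^ 2 ^ n ≤ (zimf n q : ℝ) ^ 2 * ((q / (q - 1)) ^ (n - 1) * q ^ (n + 1)) := hcount
    _ ≤ (zimf n q : ℝ) ^ 2 * E := by gcongr; exact mul_le_mul_of_nonneg_right hexp (by positivity)
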